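/- arXiv:1902.04174 — 4 statements merged into one kernel-verified Lean document; each statement's English description precedes it below -/
import Mathlib

section
/- Let Λ be a full-rank lattice in ℝ^d, and let 𝒯 be a connected Λ-periodic graph embedded in ℝ^d with finitely many vertices per fundamental domain, bounded degree, and 0 a vertex. Let ϱ be the distribution on Λ of simple random walk on 𝒯 started at 0 and stopped at the first positive time it visits Λ. Then ϱ is symmetric: ϱ(x) = ϱ(−x) for all x ∈ Λ. -/
open scoped ENNReal

set_option linter.unusedSectionVars false

section Aux
variable {d : ℕ} {Q : Type} [Fintype Q] [DecidableEq Q]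

noncomputable def piE (E : ((Fin d → ℤ) × Q) → ((Fin d → ℤ) × Q) → ℕ)
    (v : (Fin d → ℤ) × Q) : ℝ≥0∞ := ∑' w, (E v w : ℝ≥0∞)

lemma piE_shift (E : ((Fin d → ℤ) × Q) → ((Fin d → ℤ) × Q) → ℕ)
    (hperiod : ∀ (k : Fin d → ℤ) u v, E (u.1 + k, u.2) (v.1 + k, v.2) = E u v)
    (k : Fin d → ℤ) (v : (Fin d → ℤ) × Q) : piE E (v.1 + k, v.2) = piE E v := by
  calc piE E (v.1 + k, v.2)
      = ∑' w : (Fin d → ℤ) × Q, (E (v.1 + k, v.2) (w.1 + k, w.2) : ℝ≥0∞) :=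
        (((Equiv.addRight k).prodCongr (Equiv.refl Q)).tsum_eq
          fun w => (E (v.1 + k, v.2) w : ℝ≥0∞)).symm
    _ = piE E v := tsum_congr fun w => by rw [hperiod]

lemma piE_ne_top (E : ((Fin d → ℤ) × Q) → ((Fin d → ℤ) × Q) → ℕ)
    (hlocfin : ∀ v, (Function.support (E v)).Finite) (v : (Fin d → ℤ) × Q) :
    piE E v ≠ ⊤ := by
  have : piE E v = ∑ w ∈ (hlocfin v).toFinset, (E v w : ℝ≥0∞) := by
    refine tsum_eq_sum fun w hw => ?_
    simp only [Set.Finite.mem_toFinset, Function.mem_support, not_not] at hw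
    simp [hw]
  rw [this]
  exact (ENNReal.sum_lt_top.2 fun w _ => ENNReal.natCast_lt_top _).ne

end Aux

/-- Let `𝒯` be a connected `ℤ^d`-periodic graph with finitely many vertices per fundamental
domain (vertex set `(Fin d → ℤ) × Q`, `Q` finite, with the lattice `Λ` identified with the
vertices `(m, q₀)`), locally finite, with symmetric translation-invariant edge multiplicities.
The measure `ϱ` on `Λ` of simple random walk started at `0 = (0,q₀)` and stopped at its first
positive visit to `Λ` (expressed as a sum over paths of their probabilities, valued in `ℝ≥0∞`)
is symmetric: `ϱ(x) = ϱ(-x)`. -/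
theorem stmt_6 (d : ℕ) (Q : Type) [Fintype Q] [DecidableEq Q]
    (E : ((Fin d → ℤ) × Q) → ((Fin d → ℤ) × Q) → ℕ) (q₀ : Q)
    (hsymm : ∀ u v, E u v = E v u)
    (hperiod : ∀ (k : Fin d → ℤ) u v, E (u.1 + k, u.2) (v.1 + k, v.2) = E u v)
    (hlocfin : ∀ v, (Function.support (E v)).Finite)
    (hconn : ∀ u v, Relation.ReflTransGen (fun a b => 0 < E a b) u v)
    (x : Fin d → ℤ) :
    (∑' n : ℕ, ∑' p : {p : Fin (n + 2) → (Fin d → ℤ) × Q //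
        p 0 = ((0 : Fin d → ℤ), q₀) ∧ p (Fin.last (n + 1)) = (x, q₀) ∧
        ∀ i : Fin (n + 2), i ≠ 0 → i ≠ Fin.last (n + 1) → (p i).2 ≠ q₀},
      ∏ i : Fin (n + 1),
        (E (p.1 i.castSucc) (p.1 i.succ) : ℝ≥0∞) / ∑' w, (E (p.1 i.castSucc) w : ℝ≥0∞))
    =
    (∑' n : ℕ, ∑' p : {p : Fin (n + 2) → (Fin d → ℤ) × Q //
        p 0 = ((0 : Fin d → ℤ), q₀) ∧ p (Fin.last (n + 1)) = (-x, q₀) ∧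
        ∀ i : Fin (n + 2), i ≠ 0 → i ≠ Fin.last (n + 1) → (p i).2 ≠ q₀},
      ∏ i : Fin (n + 1),
        (E (p.1 i.castSucc) (p.1 i.succ) : ℝ≥0∞) / ∑' w, (E (p.1 i.castSucc) w : ℝ≥0∞)) := by
  classical
  by_cases hdeg : ∀ v : (Fin d → ℤ) × Q, piE E v ≠ 0
  · -- main case: every vertex has positive degree
    refine tsum_congr fun n => ?_
    -- reversal-and-translation map on paths
    have hE : ∀ u v : (Fin d → ℤ) × Q, E (u.1 - x, u.2) (v.1 - x, v.2) = E u v := by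
      intro u v
      have := hperiod (-x) u v
      simpa [sub_eq_add_neg] using this
    have hπ : ∀ v : (Fin d → ℤ) × Q, piE E (v.1 - x, v.2) = piE E v := by
      intro v
      have := piE_shift E hperiod (-x) v
      simpa [sub_eq_add_neg] using this
    set rv : (Fin d → ℤ) → (Fin (n + 2) → (Fin d → ℤ) × Q) →
        (Fin (n + 2) → (Fin d → ℤ) × Q) :=
      fun y p i => ((p i.rev).1 - y, (p i.rev).2) with hrvdef
    have hrv : ∀ y p, rv (-y) (rv y p) = p := by
      intro y p; funext i; simp [hrvdef, Fin.rev_rev]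
    have hprop : ∀ (y : Fin d → ℤ) (p : Fin (n + 2) → (Fin d → ℤ) × Q),
        (p 0 = ((0 : Fin d → ℤ), q₀) ∧ p (Fin.last (n + 1)) = (y, q₀) ∧
          ∀ i : Fin (n + 2), i ≠ 0 → i ≠ Fin.last (n + 1) → (p i).2 ≠ q₀) →
        ((rv y p) 0 = ((0 : Fin d → ℤ), q₀) ∧ (rv y p) (Fin.last (n + 1)) = (-y, q₀) ∧
          ∀ i : Fin (n + 2), i ≠ 0 → i ≠ Fin.last (n + 1) → ((rv y p) i).2 ≠ q₀) := by
      rintro y p ⟨h0, hl, hint⟩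
      refine ⟨?_, ?_, ?_⟩
      · have h00 : (0 : Fin (n + 2)).rev = Fin.last (n + 1) := by
          rw [← Fin.rev_last, Fin.rev_rev]
        simp only [hrvdef]
        rw [h00, hl]
        simp
      · simp only [hrvdef]
        rw [Fin.rev_last, h0]
        simp
      · intro i hi0 hil
        have h1 : i.rev ≠ 0 := by
          intro h; apply hil; have := congrArg Fin.rev h; simpa [Fin.rev_rev] using this
        have h2 : i.rev ≠ Fin.last (n + 1) := by
          intro h; apply hi0; have := congrArg Fin.rev h; simpa [Fin.rev_rev] using this
        simpa [hrvdef] using hint i.rev h1 h2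
    let e : {p : Fin (n + 2) → (Fin d → ℤ) × Q //
        p 0 = ((0 : Fin d → ℤ), q₀) ∧ p (Fin.last (n + 1)) = (x, q₀) ∧
        ∀ i : Fin (n + 2), i ≠ 0 → i ≠ Fin.last (n + 1) → (p i).2 ≠ q₀} ≃
      {p : Fin (n + 2) → (Fin d → ℤ) × Q //
        p 0 = ((0 : Fin d → ℤ), q₀) ∧ p (Fin.last (n + 1)) = (-x, q₀) ∧
        ∀ i : Fin (n + 2), i ≠ 0 → i ≠ Fin.last (n + 1) → (p i).2 ≠ q₀} :=
      { toFun := fun p => ⟨rv x p.1, hprop x p.1 p.2⟩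
        invFun := fun p => ⟨rv (-x) p.1, by simpa using hprop (-x) p.1 p.2⟩
        left_inv := fun p => Subtype.ext (hrv x p.1)
        right_inv := fun p => Subtype.ext (by simpa using hrv (-x) p.1) }
    rw [← e.tsum_eq]
    refine tsum_congr fun p => ?_
    obtain ⟨p, h0, hl, hint⟩ := p
    show (∏ i : Fin (n + 1),
        (E (p i.castSucc) (p i.succ) : ℝ≥0∞) / ∑' w, (E (p i.castSucc) w : ℝ≥0∞))
      = ∏ i : Fin (n + 1),
        (E ((rv x p) i.castSucc) ((rv x p) i.succ) : ℝ≥0∞) /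
          ∑' w, (E ((rv x p) i.castSucc) w : ℝ≥0∞)
    have step : ∀ i : Fin (n + 1),
        (E ((rv x p) i.castSucc) ((rv x p) i.succ) : ℝ≥0∞) /
          ∑' w, (E ((rv x p) i.castSucc) w : ℝ≥0∞)
        = (E (p i.rev.castSucc) (p i.rev.succ) : ℝ≥0∞) / piE E (p i.rev.succ) := by
      intro i
      have hc : (i.castSucc).rev = i.rev.succ := Fin.rev_castSucc i
      have hs : (i.succ).rev = i.rev.castSucc := Fin.rev_succ i
      have e1 : E ((rv x p) i.castSucc) ((rv x p) i.succ) = E (p i.rev.castSucc) (p i.rev.succ) := by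
        simp only [hrvdef, hc, hs]
        rw [hE (p i.rev.succ) (p i.rev.castSucc), hsymm]
      have e2 : (∑' w, (E ((rv x p) i.castSucc) w : ℝ≥0∞)) = piE E (p i.rev.succ) := by
        simp only [hrvdef, hc]
        exact hπ (p i.rev.succ)
      rw [e1, e2]
    rw [Finset.prod_congr rfl fun i _ => step i]
    -- reindex by rev
    have hrev : (∏ i : Fin (n + 1),
        (E (p i.rev.castSucc) (p i.rev.succ) : ℝ≥0∞) / piE E (p i.rev.succ))
        = ∏ i : Fin (n + 1), (E (p i.castSucc) (p i.succ) : ℝ≥0∞) / piE E (p i.succ) :=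
      Fintype.prod_equiv Fin.revPerm _ _ (fun i => rfl)
    rw [hrev]
    -- now compare denominators
    simp only [div_eq_mul_inv, Finset.prod_mul_distrib]
    have c0 : piE E ((0 : Fin d → ℤ), q₀) ≠ 0 := hdeg _
    have ct : piE E ((0 : Fin d → ℤ), q₀) ≠ ⊤ := piE_ne_top E hlocfin _
    have hlastpi : piE E (x, q₀) = piE E ((0 : Fin d → ℤ), q₀) := by
      have := piE_shift E hperiod x ((0 : Fin d → ℤ), q₀)
      simpa using this
    set F : Fin (n + 2) → ℝ≥0∞ := fun i => (piE E (p i))⁻¹ with hF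
    have key : (∏ i : Fin (n + 1), F i.succ) = ∏ i : Fin (n + 1), F i.castSucc := by
      have A : ∏ i : Fin (n + 2), F i = F 0 * ∏ i : Fin (n + 1), F i.succ :=
        Fin.prod_univ_succ F
      have B : ∏ i : Fin (n + 2), F i = (∏ i : Fin (n + 1), F i.castSucc) * F (Fin.last (n + 1)) :=
        Fin.prod_univ_castSucc F
      have hF0 : F 0 = (piE E ((0 : Fin d → ℤ), q₀))⁻¹ := by rw [hF]; simp [h0]
      have hFl : F (Fin.last (n + 1)) = (piE E ((0 : Fin d → ℤ), q₀))⁻¹ := by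
        rw [hF]; simp only [hl, hlastpi]
      have : F 0 * ∏ i : Fin (n + 1), F i.succ = F 0 * ∏ i : Fin (n + 1), F i.castSucc := by
        rw [← A, B, hF0, hFl, mul_comm]
      exact (ENNReal.mul_right_inj (by simp [hF0, ct]) (by simp [hF0, c0])).1 this
    rw [key]
    rfl
  · -- degenerate case: some vertex is isolated, graph is a single point
    push_neg at hdeg
    obtain ⟨v, hv⟩ := hdeg
    have hEv : ∀ w, E v w = 0 := by
      intro w
      have := (ENNReal.tsum_eq_zero.1 hv) w
      exact_mod_cast this
    have hall : ∀ u : (Fin d → ℤ) × Q, u = v := by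
      intro u
      rcases (hconn v u).cases_head with h | ⟨c, hc, _⟩
      · exact h.symm
      · exact absurd hc (by simp [hEv])
    have hx : -x = x := by
      have h1 := hall ((x : Fin d → ℤ), q₀)
      have h2 := hall ((-x : Fin d → ℤ), q₀)
      have := h2.trans h1.symm
      exact congrArg Prod.fst this
    rw [hx]
end

section
/- Upper bound lemma: let 𝒢 be a finite abelian group with uniform measure U, and let μ be a probability measure on 𝒢. Then for every n ≥ 1, ‖μ^{*n} − U‖_{TV} ≤ (1/2)(Σ_{ξ ∈ Ĝ, ξ ≠ 0} |μ̂(ξ)|^{2n})^{1/2}. -/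
/-- Convolution of two functions on a finite abelian group. -/
def groupConv {G : Type*} [AddCommGroup G] [Fintype G] (f g : G → ℝ) : G → ℝ :=
  fun x => ∑ y, f y * g (x - y)

/-- `n`-fold convolution power of a measure `μ` on a finite abelian group. -/
def convPow {G : Type*} [AddCommGroup G] [Fintype G] [DecidableEq G]
    (μ : G → ℝ) : ℕ → G → ℝ
  | 0 => fun x => if x = 0 then 1 else 0
  | n + 1 => groupConv μ (convPow μ n)

/-- The Fourier coefficient of `μ` at a character `ξ : G →+ ℝ/ℤ`:
`μ̂(ξ) = Σ_g μ(g) e(ξ(g))`. -/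
noncomputable def fourierCoeff' {G : Type*} [AddCommGroup G] [Fintype G]
    (μ : G → ℝ) (ξ : G →+ AddCircle (1 : ℝ)) : ℂ :=
  ∑ g, (μ g : ℂ) * (AddCircle.toCircle (ξ g) : ℂ)

/-!
Write `f = μ^{*n} - U`. Its Fourier coefficient vanishes at the trivial character, since both
measures have mass one, and equals `μ̂(ψ)^n` at every nontrivial character `ψ`, since convolution
becomes multiplication and constants are orthogonal to `ψ`. Parseval's identity gives
`|G| ‖f‖₂² = Σ_{ψ ≠ 0} |μ̂(ψ)|^{2n}`, and Cauchy–Schwarz `‖f‖₁ ≤ √|G| ‖f‖₂` concludes.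
The `ℝ/ℤ`-valued characters of the statement are matched with complex characters
through the isomorphism `ℝ/ℤ ≃ S¹`, `t ↦ e(t)`.
-/

open Finset

noncomputable def AddCircle.toCircleAddEquiv {T : ℝ} (hT : T ≠ 0) :
    AddCircle T ≃+ Additive Circle :=
  AddEquiv.ofBijective AddCircle.toCircle_addChar.toAddMonoidHom
    ⟨AddCircle.injective_toCircle hT, fun z =>
      ⟨(AddCircle.homeomorphCircle hT).symm z.toMul, by
        simp [AddCircle.toCircle_addChar, ← AddCircle.homeomorphCircle_apply hT]⟩⟩

section

variable {G : Type*} [AddCommGroup G] [Fintype G]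

variable (G) in
noncomputable def addCircleCharEquiv : (G →+ AddCircle (1 : ℝ)) ≃ AddChar G ℂ :=
  (AddCircle.toCircleAddEquiv one_ne_zero).addMonoidHomCongrRightEquiv.trans <|
    AddChar.toAddMonoidHomEquiv.symm.trans AddChar.circleEquivComplex.toEquiv

lemma addCircleCharEquiv_apply (ξ : G →+ AddCircle (1 : ℝ)) (g : G) :
    addCircleCharEquiv G ξ g = (ξ g).toCircle := rfl

lemma addCircleCharEquiv_eq_zero_iff {ξ : G →+ AddCircle (1 : ℝ)} :
    addCircleCharEquiv G ξ = 0 ↔ ξ = 0 :=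
  (addCircleCharEquiv G).injective.eq_iff' <| by
    ext g; simp [addCircleCharEquiv_apply]

noncomputable def charCoeff (a : G → ℝ) (ψ : AddChar G ℂ) : ℂ := ∑ g, (a g : ℂ) * ψ g

lemma charCoeff_addCircleCharEquiv (a : G → ℝ) (ξ : G →+ AddCircle (1 : ℝ)) :
    charCoeff a (addCircleCharEquiv G ξ) = fourierCoeff' a ξ := rfl

lemma charCoeff_zero (a : G → ℝ) : charCoeff a 0 = ∑ g, (a g : ℂ) := by
  simp [charCoeff]

lemma charCoeff_sub_const (a : G → ℝ) (c : ℝ) {ψ : AddChar G ℂ} (hψ : ψ ≠ 0) :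
    charCoeff (fun g => a g - c) ψ = charCoeff a ψ := by
  simp only [charCoeff, Complex.ofReal_sub, sub_mul, sum_sub_distrib, ← mul_sum,
    AddChar.sum_eq_zero_iff_ne_zero.2 hψ, mul_zero, sub_zero]

lemma charCoeff_groupConv (a b : G → ℝ) (ψ : AddChar G ℂ) :
    charCoeff (groupConv a b) ψ = charCoeff a ψ * charCoeff b ψ := by
  simp only [charCoeff, groupConv, Complex.ofReal_sum, Complex.ofReal_mul, sum_mul]
  rw [sum_comm]
  refine sum_congr rfl fun y _ => ?_
  rw [mul_sum]
  refine Fintype.sum_equiv (Equiv.subRight y) _ _ fun x => ?_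
  have hψ : ψ x = ψ y * ψ (x - y) := by rw [← ψ.map_add_eq_mul, add_sub_cancel]
  rw [Equiv.subRight_apply, hψ]
  ring

lemma charCoeff_convPow [DecidableEq G] (μ : G → ℝ) (n : ℕ) (ψ : AddChar G ℂ) :
    charCoeff (convPow μ n) ψ = charCoeff μ ψ ^ n := by
  induction n with
  | zero => simp [charCoeff, convPow, apply_ite]
  | succ n ih => rw [convPow, charCoeff_groupConv, ih, pow_succ']

lemma sum_convPow [DecidableEq G] {μ : G → ℝ} (hμ : ∑ g, μ g = 1) (n : ℕ) :
    ∑ g, convPow μ n g = 1 := by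
  have h := charCoeff_convPow μ n 0
  rw [charCoeff_zero, charCoeff_zero, ← Complex.ofReal_sum, ← Complex.ofReal_sum, hμ,
    Complex.ofReal_one, one_pow] at h
  exact_mod_cast h

lemma sum_norm_sq_charCoeff [DecidableEq G] (a : G → ℝ) :
    ∑ ψ : AddChar G ℂ, ‖charCoeff a ψ‖ ^ 2 = Fintype.card G * ∑ g, a g ^ 2 := by
  apply Complex.ofReal_injective
  push_cast
  simp_rw [← Complex.mul_conj', charCoeff, map_sum, map_mul, Complex.conj_ofReal,
    ← AddChar.map_neg_eq_conj, sum_mul_sum, mul_mul_mul_comm, ← AddChar.map_add_eq_mul,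
    ← sub_eq_add_neg]
  calc _ = ∑ x, ∑ y, (a x : ℂ) * a y * ∑ ψ : AddChar G ℂ, ψ (x - y) := by
        rw [sum_comm]
        refine sum_congr rfl fun x _ => ?_
        rw [sum_comm]
        simp_rw [mul_sum]
    _ = _ := by
        simp [AddChar.sum_apply_eq_ite, sub_eq_zero, mul_sum, sq, mul_comm]

lemma sum_abs_le_sqrt_card_mul_sum_sq {ι : Type*} [Fintype ι] (f : ι → ℝ) :
    ∑ i, |f i| ≤ √(Fintype.card ι * ∑ i, f i ^ 2) := by
  refine Real.le_sqrt_of_sq_le ?_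
  simpa only [sq_abs, card_univ] using
    sq_sum_le_card_mul_sum_sq (s := univ) (f := fun i => |f i|)

end

theorem stmt_10_general {G : Type*} [AddCommGroup G] [Fintype G] [DecidableEq G]
    (μ : G → ℝ) (hsum : ∑ g, μ g = 1)
    (n : ℕ)
    (D : Finset (G →+ AddCircle (1 : ℝ)))
    (hD : ∀ ξ, ξ ∈ D ↔ ξ ≠ 0) :
    (1 / 2) * ∑ x, |convPow μ n x - (1 / Fintype.card G : ℝ)| ≤
      (1 / 2) * Real.sqrt (∑ ξ ∈ D, ‖fourierCoeff' μ ξ‖ ^ (2 * n)) := by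
  set f : G → ℝ := fun x => convPow μ n x - 1 / Fintype.card G
  have hf0 : charCoeff f 0 = 0 := by
    rw [charCoeff_zero, ← Complex.ofReal_sum, sum_sub_distrib, sum_convPow hsum, sum_const,
      card_univ, nsmul_eq_mul, mul_one_div_cancel (by exact_mod_cast Fintype.card_ne_zero),
      sub_self, Complex.ofReal_zero]
  have hparseval : Fintype.card G * ∑ x, f x ^ 2 = ∑ ξ ∈ D, ‖fourierCoeff' μ ξ‖ ^ (2 * n) := by
    rw [← sum_norm_sq_charCoeff, ← add_sum_erase _ _ (mem_univ 0), hf0, norm_zero,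
      zero_pow two_ne_zero, zero_add]
    refine (sum_equiv (addCircleCharEquiv G) (fun ξ => ?_) fun ξ hξ => ?_).symm
    · simp [hD, addCircleCharEquiv_eq_zero_iff]
    · rw [charCoeff_sub_const _ _ (addCircleCharEquiv_eq_zero_iff.not.2 ((hD ξ).1 hξ)),
        charCoeff_convPow, charCoeff_addCircleCharEquiv, norm_pow, ← pow_mul, mul_comm]
  gcongr
  exact hparseval ▸ sum_abs_le_sqrt_card_mul_sum_sq f

/-- Upper bound lemma: for a probability measure `μ` on a finite abelian group `G`,
`‖μ^{*n} − U‖_TV ≤ (1/2)(Σ_{ξ≠0} |μ̂(ξ)|^{2n})^{1/2}`, the sum being over all nontrivial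
characters of `G` (collected in the finset `D`). -/
theorem stmt_10 {G : Type*} [AddCommGroup G] [Fintype G] [DecidableEq G]
    (μ : G → ℝ) (hpos : ∀ g, 0 ≤ μ g) (hsum : ∑ g, μ g = 1)
    (n : ℕ) (hn : 1 ≤ n)
    (D : Finset (G →+ AddCircle (1 : ℝ)))
    (hD : ∀ ξ, ξ ∈ D ↔ ξ ≠ 0) :
    (1 / 2) * ∑ x, |convPow μ n x - (1 / Fintype.card G : ℝ)| ≤
      (1 / 2) * Real.sqrt (∑ ξ ∈ D, ‖fourierCoeff' μ ξ‖ ^ (2 * n)) :=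
  stmt_10_general μ hsum n D hD
end

section
/- Let ξ be in the dual group of the sandpile group of a finite graph G with sink s, with distinguished prevector ν (the reduced Laplacian applied to the representative ξ' of ξ whose values lie in (C(ξ)−1/2, C(ξ)+1/2] where C(ξ) = (1/2π)arg μ̂(ξ)). Then 1 − |μ̂(ξ)| ≫ ‖ν‖₂²/|V| ≥ ‖ν‖₁/|V|, where the implied constant depends only on the maximal degree of G. -/
/-! Let `C = arg μ̂(ξ) / 2π`. Rotating `μ̂(ξ)` by `e(-C)` gives
`|V| |μ̂(ξ)| = Σ_v cos 2π(ξ'_v - C)`, and since `|ξ'_v - C| ≤ 1/2`, the bound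
`1 - cos 2πx ≥ 8x²` yields `|V| (1 - |μ̂(ξ)|) ≥ 8 ‖ξ' - C‖₂²`. Away from the sink, `ν` is the
Laplacian of `ξ' - C`, and the Laplacian has operator norm at most `2 · maxdeg`, so
`‖ν‖₂² ≤ 4 maxdeg² ‖ξ' - C‖₂²`. Finally `ν` is integer valued, so `|ν_v| ≤ ν_v²`. -/

open Finset Real

lemma eight_mul_sq_le_one_sub_cos_two_pi_mul {y : ℝ} (hy : |y| ≤ 1 / 2) :
    8 * y ^ 2 ≤ 1 - cos (2 * π * y) := by
  have h : |2 * π * y| ≤ π := by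
    rw [abs_mul, abs_of_pos two_pi_pos]
    nlinarith [pi_pos]
  have hcos := cos_le_one_sub_mul_cos_sq h
  have hrw : 2 / π ^ 2 * (2 * π * y) ^ 2 = 8 * y ^ 2 := by
    field_simp
    ring
  linarith

lemma abs_intCast_le_sq (m : ℤ) : |(m : ℝ)| ≤ (m : ℝ) ^ 2 := by
  have h : |m| ≤ m ^ 2 := Int.natCast_natAbs m ▸ Int.natAbs_le_self_sq m
  exact_mod_cast h

lemma sum_abs_le_sum_sq_of_intCast {ι : Type*} (t : Finset ι) {f : ι → ℝ}
    (hf : ∀ i, ∃ m : ℤ, f i = m) : ∑ i ∈ t, |f i| ≤ ∑ i ∈ t, f i ^ 2 :=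
  sum_le_sum fun i _ => by
    obtain ⟨m, hm⟩ := hf i
    exact hm ▸ abs_intCast_le_sq m

lemma abs_arg_div_two_pi_le (z : ℂ) : |Complex.arg z / (2 * π)| ≤ 1 / 2 := by
  rw [abs_div, abs_of_pos two_pi_pos, div_le_iff₀ two_pi_pos]
  linarith [Complex.abs_arg_le_pi z]

lemma Complex.mul_exp_neg_arg_mul_I (z : ℂ) : z * exp (-(arg z * I)) = ‖z‖ := by
  nth_rw 1 [← norm_mul_exp_arg_mul_I z]
  rw [mul_assoc, ← exp_add, add_neg_cancel, exp_zero, mul_one]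

section Fourier

variable {V : Type*} [Fintype V]

/-- `μ̂(ξ)`: the Fourier transform at `ξ` of the uniform measure on `V`. -/
noncomputable def fourierMean (ξ : V → ℝ) : ℂ :=
  (1 / Fintype.card V : ℂ) * ∑ v, Complex.exp (2 * π * Complex.I * (ξ v : ℝ))

lemma card_mul_norm_fourierMean [Nonempty V] (ξ : V → ℝ) :
    Fintype.card V * ‖fourierMean ξ‖ = ∑ v, cos (2 * π * ξ v - Complex.arg (fourierMean ξ)) := by
  set F := fourierMean ξ
  have hn : (Fintype.card V : ℂ) ≠ 0 := by exact_mod_cast Fintype.card_ne_zero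
  have h : ((Fintype.card V * ‖F‖ : ℝ) : ℂ)
      = ∑ v, Complex.exp (((2 * π * ξ v - Complex.arg F : ℝ) : ℂ) * Complex.I) := by
    push_cast
    rw [← Complex.mul_exp_neg_arg_mul_I F, ← mul_assoc]
    simp only [F, fourierMean, ← mul_assoc, mul_one_div_cancel hn, one_mul, sum_mul,
      ← Complex.exp_add]
    congr! 2
    ring
  rw [← Complex.ofReal_re (_ * _), h, Complex.re_sum]
  simp only [Complex.exp_ofReal_mul_I_re]

lemma sum_sq_sub_le_card_mul_one_sub_norm_fourierMean [Nonempty V] {ξ η : V → ℝ}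
    (hη : ∀ v, ∃ k : ℤ, η v = ξ v + k)
    (hnear : ∀ v, |η v - Complex.arg (fourierMean ξ) / (2 * π)| ≤ 1 / 2) :
    8 * ∑ v, (η v - Complex.arg (fourierMean ξ) / (2 * π)) ^ 2
      ≤ Fintype.card V * (1 - ‖fourierMean ξ‖) := by
  set C := Complex.arg (fourierMean ξ) / (2 * π)
  have hcos : ∀ v, cos (2 * π * ξ v - Complex.arg (fourierMean ξ)) = cos (2 * π * (η v - C)) := by
    intro v
    obtain ⟨k, hk⟩ := hη v
    rw [hk, show 2 * π * (ξ v + k - C) = 2 * π * ξ v - Complex.arg (fourierMean ξ) + k * (2 * π) by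
      simp only [C]; field_simp; ring, cos_add_int_mul_two_pi]
  calc 8 * ∑ v, (η v - C) ^ 2 ≤ ∑ v, (1 - cos (2 * π * (η v - C))) := by
        rw [mul_sum]
        exact sum_le_sum fun v _ => eight_mul_sq_le_one_sub_cos_two_pi_mul (hnear v)
    _ = Fintype.card V * (1 - ‖fourierMean ξ‖) := by
        simp only [mul_sub, mul_one, card_mul_norm_fourierMean, hcos, sum_sub_distrib, sum_const,
          card_univ, nsmul_eq_mul, mul_one]

end Fourier

section WeightedDifferences

variable {V : Type*} [Fintype V] {a : V → V → ℝ} {D : ℝ}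

lemma sq_sum_weighted_sub_le (ha : ∀ v w, 0 ≤ a v w) (hD : ∀ v, ∑ w, a v w ≤ D) (f : V → ℝ)
    (v : V) : (∑ w, a v w * (f v - f w)) ^ 2 ≤ D * ∑ w, a v w * (f v - f w) ^ 2 := by
  calc (∑ w, a v w * (f v - f w)) ^ 2 ≤ (∑ w, a v w) * ∑ w, a v w * (f v - f w) ^ 2 :=
        sum_sq_le_sum_mul_sum_of_sq_le_mul _ (fun w _ => ha v w)
          (fun w _ => mul_nonneg (ha v w) (sq_nonneg _)) fun w _ => le_of_eq (by ring)
    _ ≤ D * ∑ w, a v w * (f v - f w) ^ 2 :=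
        mul_le_mul_of_nonneg_right (hD v) (sum_nonneg fun w _ => mul_nonneg (ha v w) (sq_nonneg _))

lemma sum_sum_weighted_sq_sub_le (ha : ∀ v w, 0 ≤ a v w) (hsymm : ∀ v w, a v w = a w v)
    (hD : ∀ v, ∑ w, a v w ≤ D) (f : V → ℝ) :
    ∑ v, ∑ w, a v w * (f v - f w) ^ 2 ≤ 4 * D * ∑ v, f v ^ 2 := by
  have hswap : ∑ v, ∑ w, a w v * f w ^ 2 = ∑ v, (∑ w, a v w) * f v ^ 2 := by
    rw [sum_comm]
    simp only [sum_mul]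
  calc ∑ v, ∑ w, a v w * (f v - f w) ^ 2
        ≤ ∑ v, ∑ w, (2 * (a v w * f v ^ 2) + 2 * (a w v * f w ^ 2)) :=
        sum_le_sum fun v _ => sum_le_sum fun w _ => by
          rw [hsymm w v]
          nlinarith [mul_nonneg (ha v w) (sq_nonneg (f v + f w))]
    _ = 4 * ∑ v, (∑ w, a v w) * f v ^ 2 := by
        simp only [sum_add_distrib, ← mul_sum, hswap, sum_mul]
        ring
    _ ≤ 4 * ∑ v, D * f v ^ 2 := by
        gcongr with v
        exact hD v
    _ = 4 * D * ∑ v, f v ^ 2 := by rw [← mul_sum, mul_assoc]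

lemma sum_sq_sum_weighted_sub_le (ha : ∀ v w, 0 ≤ a v w) (hsymm : ∀ v w, a v w = a w v)
    (hD : ∀ v, ∑ w, a v w ≤ D) (f : V → ℝ) :
    ∑ v, (∑ w, a v w * (f v - f w)) ^ 2 ≤ 4 * D ^ 2 * ∑ v, f v ^ 2 := by
  rcases isEmpty_or_nonempty V with _ | ⟨⟨v₀⟩⟩
  · simp
  have hD₀ : 0 ≤ D := (sum_nonneg fun w _ => ha v₀ w).trans (hD v₀)
  calc ∑ v, (∑ w, a v w * (f v - f w)) ^ 2 ≤ ∑ v, D * ∑ w, a v w * (f v - f w) ^ 2 :=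
        sum_le_sum fun v _ => sq_sum_weighted_sub_le ha hD f v
    _ = D * ∑ v, ∑ w, a v w * (f v - f w) ^ 2 := (mul_sum ..).symm
    _ ≤ D * (4 * D * ∑ v, f v ^ 2) :=
        mul_le_mul_of_nonneg_left (sum_sum_weighted_sq_sub_le ha hsymm hD f) hD₀
    _ = 4 * D ^ 2 * ∑ v, f v ^ 2 := by ring

end WeightedDifferences

section Sandpile

variable {V : Type*} [Fintype V] (deg : V → V → ℕ)

def laplacian (f : V → ℝ) (v : V) : ℝ :=
  (∑ w, (deg v w : ℝ)) * f v - ∑ w, (deg v w : ℝ) * f w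

/-- The paper's `Δ'`: the Laplacian with the row and column of the sink `s` deleted. -/
def reducedLaplacian [DecidableEq V] (s : V) (f : V → ℝ) (v : V) : ℝ :=
  if v = s then 0 else
    (∑ w, (deg v w : ℝ)) * f v - ∑ w, (if w = s then (0 : ℝ) else (deg v w : ℝ) * f w)

lemma laplacian_eq_sum_mul_sub (f : V → ℝ) (v : V) :
    laplacian deg f v = ∑ w, (deg v w : ℝ) * (f v - f w) := by
  simp only [laplacian, mul_sub, sum_sub_distrib, sum_mul]

lemma laplacian_sub_const (f : V → ℝ) (c : ℝ) :
    laplacian deg (fun v => f v - c) = laplacian deg f := by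
  ext v
  simp only [laplacian_eq_sum_mul_sub, sub_sub_sub_cancel_right]

lemma laplacian_add (f g : V → ℝ) (v : V) :
    laplacian deg (fun w => f w + g w) v = laplacian deg f v + laplacian deg g v := by
  simp only [laplacian, mul_add, sum_add_distrib]
  ring

lemma laplacian_intCast (K : V → ℤ) (v : V) :
    laplacian deg (fun w => (K w : ℝ)) v
      = ((∑ w, (deg v w : ℤ)) * K v - ∑ w, deg v w * K w : ℤ) := by
  push_cast [laplacian]
  rfl

lemma sum_sq_laplacian_le (hsymm : ∀ v w, deg v w = deg w v) {D : ℕ}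
    (hD : ∀ v, ∑ w, deg v w ≤ D) (f : V → ℝ) :
    ∑ v, laplacian deg f v ^ 2 ≤ 4 * (D : ℝ) ^ 2 * ∑ v, f v ^ 2 := by
  simp only [laplacian_eq_sum_mul_sub]
  exact sum_sq_sum_weighted_sub_le (fun v w => Nat.cast_nonneg _)
    (fun v w => congrArg _ (hsymm v w)) (fun v => by exact_mod_cast hD v) f

variable [DecidableEq V] {s : V} {f : V → ℝ}

lemma reducedLaplacian_self (f : V → ℝ) : reducedLaplacian deg s f s = 0 := if_pos rfl

lemma reducedLaplacian_of_ne (hf : f s = 0) {v : V} (hv : v ≠ s) :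
    reducedLaplacian deg s f v = laplacian deg f v := by
  rw [reducedLaplacian, if_neg hv, laplacian]
  congr 1
  refine sum_congr rfl fun w _ => ?_
  split_ifs with hw
  · rw [hw, hf, mul_zero]
  · rfl

lemma sum_sq_reducedLaplacian_le (hf : f s = 0) :
    ∑ v, reducedLaplacian deg s f v ^ 2 ≤ ∑ v, laplacian deg f v ^ 2 := by
  refine sum_le_sum fun v _ => ?_
  rcases eq_or_ne v s with rfl | hv
  · rw [reducedLaplacian_self]
    simpa using sq_nonneg _
  · rw [reducedLaplacian_of_ne deg hf hv]

lemma exists_intCast_reducedLaplacian {ξ ξ' : V → ℝ} (hξ' : ξ' s = 0)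
    (hξ : ∀ v, v ≠ s → ∃ k : ℤ, laplacian deg ξ v = k)
    (hshift : ∀ v, ∃ k : ℤ, ξ' v = ξ v + k) (v : V) :
    ∃ m : ℤ, reducedLaplacian deg s ξ' v = m := by
  rcases eq_or_ne v s with rfl | hv
  · exact ⟨0, by rw [reducedLaplacian_self, Int.cast_zero]⟩
  choose K hK using hshift
  obtain ⟨k, hk⟩ := hξ v hv
  have hξ'K : ξ' = fun w => ξ w + K w := funext hK
  refine ⟨k + ((∑ w, (deg v w : ℤ)) * K v - ∑ w, deg v w * K w), ?_⟩
  rw [reducedLaplacian_of_ne deg hξ' hv, hξ'K, laplacian_add, hk, laplacian_intCast, Int.cast_add]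

end Sandpile

/-- Let `ξ` be (a real representative of) an element of the dual of the sandpile group of a
finite multigraph with sink `s` (so `ξ(s) = 0` and the reduced Laplacian of `ξ` is integer
valued), and let `ξ'` be the distinguished representative, with values in
`(C(ξ) − 1/2, C(ξ) + 1/2]` where `C(ξ) = (1/2π) arg μ̂(ξ)`, and `ν = Δ'ξ'` the distinguished
prevector.  Then `1 − |μ̂(ξ)| ≫ ‖ν‖₂²/|V| ≥ ‖ν‖₁/|V|`, the implied constant depending only
on the maximal degree. -/
theorem stmt_13 :
    ∀ Dmax : ℕ, ∃ κ : ℝ, 0 < κ ∧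
      ∀ (V : Type) [Fintype V] [DecidableEq V] (deg : V → V → ℕ) (s : V),
        (∀ v w, deg v w = deg w v) → (∀ v, deg v v = 0) →
        (∀ v, ∑ w, deg v w ≤ Dmax) →
        ∀ ξ ξ' : V → ℝ, ξ s = 0 →
        (∀ v, v ≠ s → ∃ k : ℤ,
          (∑ w, (deg v w : ℝ)) * ξ v - ∑ w, (deg v w : ℝ) * ξ w = k) →
        ∀ (F : ℂ), F = (1 / Fintype.card V : ℂ) *
            ∑ v, Complex.exp (2 * Real.pi * Complex.I * (ξ v : ℝ)) →
        ∀ (C : ℝ), C = Complex.arg F / (2 * Real.pi) →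
        ξ' s = 0 →
        (∀ v, v ≠ s → (∃ k : ℤ, ξ' v = ξ v + k) ∧
          ξ' v ∈ Set.Ioc (C - 1 / 2) (C + 1 / 2)) →
        ∀ (ν : V → ℝ), (ν = fun v => if v = s then 0 else
            (∑ w, (deg v w : ℝ)) * ξ' v -
              ∑ w, (if w = s then (0 : ℝ) else (deg v w : ℝ) * ξ' w)) →
        κ * ((∑ v, ν v ^ 2) / Fintype.card V) ≤ 1 - ‖F‖ ∧
          (∑ v, |ν v|) / Fintype.card V ≤ (∑ v, ν v ^ 2) / Fintype.card V := by
  intro D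
  refine ⟨2 / ((D : ℝ) + 1) ^ 2, by positivity, ?_⟩
  intro V _ _ deg s hsymm _ hD ξ ξ' hξs hξ F hF C hC hξ's hξ' ν hν
  obtain rfl : F = fourierMean ξ := hF
  obtain rfl : ν = reducedLaplacian deg s ξ' := hν
  have : Nonempty V := ⟨s⟩
  have hshift : ∀ v, ∃ k : ℤ, ξ' v = ξ v + k := fun v =>
    if hv : v = s then ⟨0, by rw [hv, hξ's, hξs, Int.cast_zero, add_zero]⟩ else (hξ' v hv).1
  have hnear : ∀ v, |ξ' v - C| ≤ 1 / 2 := fun v =>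
    if hv : v = s then by simpa [hv, hξ's, hC] using abs_arg_div_two_pi_le (fourierMean ξ)
    else abs_sub_le_iff.2 ⟨by linarith [(hξ' v hv).2.2], by linarith [(hξ' v hv).2.1]⟩
  refine ⟨?_, div_le_div_of_nonneg_right (sum_abs_le_sum_sq_of_intCast _
    (exists_intCast_reducedLaplacian deg hξ's hξ hshift)) (Nat.cast_nonneg _)⟩
  have hν : ∑ v, reducedLaplacian deg s ξ' v ^ 2
      ≤ 4 * (D : ℝ) ^ 2 * ∑ v, (ξ' v - C) ^ 2 := by
    refine (sum_sq_reducedLaplacian_le deg hξ's).trans ?_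
    rw [← laplacian_sub_const deg ξ' C]
    exact sum_sq_laplacian_le deg hsymm hD _
  have hFourier := sum_sq_sub_le_card_mul_one_sub_norm_fourierMean hshift (hC ▸ hnear)
  rw [← hC] at hFourier
  have hκ : 2 / ((D : ℝ) + 1) ^ 2 * (4 * (D : ℝ) ^ 2) ≤ 8 := by
    rw [div_mul_eq_mul_div, div_le_iff₀ (by positivity)]
    nlinarith [(Nat.cast_nonneg D : (0 : ℝ) ≤ D)]
  rw [← mul_div_assoc, div_le_iff₀ (by exact_mod_cast Fintype.card_pos)]
  calc 2 / ((D : ℝ) + 1) ^ 2 * ∑ v, reducedLaplacian deg s ξ' v ^ 2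
      ≤ 2 / ((D : ℝ) + 1) ^ 2 * (4 * (D : ℝ) ^ 2) * ∑ v, (ξ' v - C) ^ 2 := by
        rw [mul_assoc]
        gcongr
    _ ≤ 8 * ∑ v, (ξ' v - C) ^ 2 := by gcongr
    _ ≤ (1 - ‖fourierMean ξ‖) * Fintype.card V := by linarith
end

section
/- Let μ be a lazy, symmetric probability measure on ℤ^d (μ(0) > 0, μ(x) = μ(−x)) whose support generates ℤ^d and which has exponentially decaying tails. Then there exist constants δ, c₂ > 0 such that the characteristic function μ̂(x) = Σ_n μ(n) cos(2π n·x) satisfies |μ̂(x)| ≤ 1 − c₂ ‖x‖²_{(ℝ/ℤ)^d} for all x ∈ (ℝ/ℤ)^d. -/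
/-!
For `w` in the support of `μ`, `1 - μ̂(x) ≥ μ(w) (1 - cos 2π⟨w, x⟩) ≥ 8 μ(w) ‖⟨w, x⟩‖²_{ℝ/ℤ}`.
The `v` with `‖⟨v, x⟩‖²_{ℝ/ℤ} ≤ C (1 - μ̂(x))` uniformly in `x` form a subgroup, because
`‖a + b‖² ≤ 2‖a‖² + 2‖b‖²`; as the support generates `ℤ^d`, it contains the basis vectors,
so `‖x‖²_{(ℝ/ℤ)^d} ≲ 1 - μ̂(x)`. On the other side, laziness gives `1 + μ̂(x) ≥ 2 μ(0)`,
while `‖x‖²_{(ℝ/ℤ)^d} ≤ d / 4`.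
-/

open Real

section Pairing

variable {ι : Type*} [Fintype ι]

def intPairing (x : ι → ℝ) : (ι → ℤ) →+ ℝ where
  toFun n := ∑ i, (n i : ℝ) * x i
  map_zero' := by simp
  map_add' m n := by simp only [Pi.add_apply, Int.cast_add, add_mul, Finset.sum_add_distrib]

@[simp]
lemma intPairing_apply (x : ι → ℝ) (n : ι → ℤ) : intPairing x n = ∑ i, (n i : ℝ) * x i := rfl

lemma intPairing_single [DecidableEq ι] (x : ι → ℝ) (i : ι) :
    intPairing x (Pi.single i 1) = x i := by
  simp [Pi.single_apply]

end Pairing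

def sqNormDominatedSubgroup {G E X : Type*} [AddGroup G] [SeminormedAddGroup E]
    (χ : X → G →+ E) (D : X → ℝ) : AddSubgroup G where
  carrier := {v | ∃ C, 0 ≤ C ∧ ∀ x, ‖χ x v‖ ^ 2 ≤ C * D x}
  zero_mem' := ⟨0, le_rfl, fun x => by simp⟩
  add_mem' := by
    rintro a b ⟨C₁, hC₁, h₁⟩ ⟨C₂, hC₂, h₂⟩
    refine ⟨2 * C₁ + 2 * C₂, by positivity, fun x => ?_⟩
    calc ‖χ x (a + b)‖ ^ 2 ≤ (‖χ x a‖ + ‖χ x b‖) ^ 2 := by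
          rw [map_add]; gcongr; exact norm_add_le _ _
      _ ≤ 2 * (‖χ x a‖ ^ 2 + ‖χ x b‖ ^ 2) := add_sq_le
      _ ≤ (2 * C₁ + 2 * C₂) * D x := by linarith [h₁ x, h₂ x]
  neg_mem' := by
    rintro a ⟨C, hC, h⟩
    exact ⟨C, hC, fun x => by simpa only [map_neg, norm_neg] using h x⟩

lemma UnitAddCircle.norm_sq_le_one_sub_cos (θ : ℝ) :
    ‖(θ : UnitAddCircle)‖ ^ 2 ≤ (1 - cos (2 * π * θ)) / 8 := by
  have ht : |2 * π * (θ - round θ)| ≤ π := by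
    rw [abs_mul, abs_of_pos two_pi_pos]
    nlinarith [abs_sub_round θ, pi_pos]
  have hcos : cos (2 * π * θ) = cos (2 * π * (θ - round θ)) := by
    rw [mul_sub, ← cos_sub_int_mul_two_pi _ (round θ)]
    ring_nf
  rw [UnitAddCircle.norm_eq, sq_abs, hcos]
  have := cos_le_one_sub_mul_cos_sq ht
  field_simp at this
  nlinarith

lemma UnitAddCircle.sum_norm_sq_le {ι : Type*} [Fintype ι] (x : ι → ℝ) :
    ∑ i, ‖(x i : UnitAddCircle)‖ ^ 2 ≤ Fintype.card ι / 4 := by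
  have h (i : ι) : ‖(x i : UnitAddCircle)‖ ^ 2 ≤ 1 / 4 := by
    have := AddCircle.norm_le_half_period 1 (x := (x i : UnitAddCircle)) one_ne_zero
    rw [abs_one] at this
    nlinarith [norm_nonneg (x i : UnitAddCircle)]
  calc ∑ i, ‖(x i : UnitAddCircle)‖ ^ 2 ≤ ∑ _i : ι, (1 / 4 : ℝ) := Finset.sum_le_sum fun i _ => h i
    _ = Fintype.card ι / 4 := by simp [div_eq_mul_inv]

section WeightedSum

variable {α : Type*} {μ g : α → ℝ}

lemma hasSum_mul_one_sub_tsum (hμ : ∀ a, 0 ≤ μ a) (h1 : HasSum μ 1) (hg : ∀ a, |g a| ≤ 1) :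
    HasSum (fun a => μ a * (1 - g a)) (1 - ∑' a, μ a * g a) := by
  have hsum : Summable fun a => μ a * g a := by
    refine h1.summable.of_norm_bounded fun a => ?_
    rw [norm_mul, Real.norm_eq_abs, abs_of_nonneg (hμ a)]
    exact mul_le_of_le_one_right (hμ a) (hg a)
  simpa only [mul_sub, mul_one] using h1.sub hsum.hasSum

lemma mul_one_sub_le_one_sub_tsum (hμ : ∀ a, 0 ≤ μ a) (h1 : HasSum μ 1) (hg : ∀ a, |g a| ≤ 1)
    (a : α) : μ a * (1 - g a) ≤ 1 - ∑' b, μ b * g b :=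
  le_hasSum (hasSum_mul_one_sub_tsum hμ h1 hg) a fun b _ =>
    mul_nonneg (hμ b) (sub_nonneg.2 (abs_le.1 (hg b)).2)

lemma abs_tsum_mul_le_one (hμ : ∀ a, 0 ≤ μ a) (h1 : HasSum μ 1) (hg : ∀ a, |g a| ≤ 1) :
    |∑' a, μ a * g a| ≤ 1 := by
  have hneg : ∀ a, |-g a| ≤ 1 := fun a => (abs_neg (g a)).trans_le (hg a)
  have h₁ := (hasSum_mul_one_sub_tsum hμ h1 hg).nonneg fun a =>
    mul_nonneg (hμ a) (sub_nonneg.2 (abs_le.1 (hg a)).2)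
  have h₂ := (hasSum_mul_one_sub_tsum hμ h1 hneg).nonneg fun a =>
    mul_nonneg (hμ a) (sub_nonneg.2 (abs_le.1 (hneg a)).2)
  simp only [mul_neg, tsum_neg] at h₂
  rw [abs_le]; constructor <;> linarith

end WeightedSum

section CosTransform

variable {ι : Type*} [Fintype ι] {μ : (ι → ℤ) → ℝ}

noncomputable def cosTransform (μ : (ι → ℤ) → ℝ) (x : ι → ℝ) : ℝ :=
  ∑' n, μ n * cos (2 * π * intPairing x n)

def circlePairing (x : ι → ℝ) : (ι → ℤ) →+ UnitAddCircle :=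
  (QuotientAddGroup.mk' _).comp (intPairing x)

lemma circlePairing_apply (x : ι → ℝ) (n : ι → ℤ) :
    circlePairing x n = (intPairing x n : UnitAddCircle) := rfl

variable (hμ : ∀ n, 0 ≤ μ n) (h1 : HasSum μ 1)
include hμ h1

lemma abs_cosTransform_le_one (x : ι → ℝ) : |cosTransform μ x| ≤ 1 :=
  abs_tsum_mul_le_one hμ h1 fun _ => abs_cos_le_one _

lemma mul_one_sub_cos_le_one_sub_cosTransform (x : ι → ℝ) (n : ι → ℤ) :
    μ n * (1 - cos (2 * π * intPairing x n)) ≤ 1 - cosTransform μ x :=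
  mul_one_sub_le_one_sub_tsum hμ h1 (g := fun n => cos (2 * π * intPairing x n))
    (fun _ => abs_cos_le_one _) n

lemma two_mul_le_one_add_cosTransform (x : ι → ℝ) : 2 * μ 0 ≤ 1 + cosTransform μ x := by
  have := mul_one_sub_le_one_sub_tsum hμ h1 (g := fun n => -cos (2 * π * intPairing x n))
    (fun _ => (abs_neg _).trans_le (abs_cos_le_one _)) 0
  simp only [map_zero, mul_zero, cos_zero, mul_neg, tsum_neg, sub_neg_eq_add] at this
  unfold cosTransform
  linarith

lemma mem_sqNormDominatedSubgroup_of_pos {w : ι → ℤ} (hw : 0 < μ w) :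
    w ∈ sqNormDominatedSubgroup circlePairing (fun x => 1 - cosTransform μ x) := by
  refine ⟨(8 * μ w)⁻¹, by positivity, fun x => ?_⟩
  rw [circlePairing_apply, inv_mul_eq_div, le_div_iff₀ (by positivity)]
  have := mul_one_sub_cos_le_one_sub_cosTransform hμ h1 x w
  nlinarith [UnitAddCircle.norm_sq_le_one_sub_cos (intPairing x w)]

lemma exists_sum_norm_sq_le_mul_one_sub_cosTransform
    (hgen : AddSubgroup.closure (Function.support μ) = ⊤) :
    ∃ A, 0 ≤ A ∧ ∀ x : ι → ℝ, ∑ i, ‖(x i : UnitAddCircle)‖ ^ 2 ≤ A * (1 - cosTransform μ x) := by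
  classical
  have hdom (v : ι → ℤ) : v ∈ sqNormDominatedSubgroup circlePairing (1 - cosTransform μ ·) := by
    refine (AddSubgroup.closure_le _).2 (fun w hw => ?_) (hgen ▸ AddSubgroup.mem_top v)
    exact mem_sqNormDominatedSubgroup_of_pos hμ h1 ((hμ w).lt_of_ne' hw)
  choose C hC₀ hC using fun i => hdom (Pi.single i 1)
  refine ⟨∑ i, C i, Finset.sum_nonneg fun i _ => hC₀ i, fun x => ?_⟩
  rw [Finset.sum_mul]
  refine Finset.sum_le_sum fun i _ => ?_
  simpa only [circlePairing_apply, intPairing_single] using hC i x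

end CosTransform

lemma abs_le_one_sub_inv_mul_of_le_mul {φ T A B : ℝ} (hφ : |φ| ≤ 1) (hA : 0 ≤ A) (hB : 0 ≤ B)
    (h₁ : T ≤ A * (1 - φ)) (h₂ : T ≤ B * (1 + φ)) : |φ| ≤ 1 - (A + B + 1)⁻¹ * T := by
  rw [abs_le] at hφ ⊢
  have hK : 0 < A + B + 1 := by positivity
  have hsub : T / (A + B + 1) ≤ 1 - φ := by rw [div_le_iff₀ hK]; nlinarith
  have hadd : T / (A + B + 1) ≤ 1 + φ := by rw [div_le_iff₀ hK]; nlinarith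
  rw [inv_mul_eq_div]
  constructor <;> linarith

theorem stmt_18_general (d : ℕ)
    (μ : (Fin d → ℤ) → ℝ)
    (hpos : ∀ n, 0 ≤ μ n) (hprob : HasSum μ 1)
    (hlazy : 0 < μ 0)
    (hgen : AddSubgroup.closure (Function.support μ) = (⊤ : AddSubgroup (Fin d → ℤ))) :
    ∃ c₂ : ℝ, 0 < c₂ ∧ ∀ x : Fin d → ℝ,
      |∑' n, μ n * Real.cos (2 * Real.pi * ∑ i, (n i : ℝ) * x i)| ≤
        1 - c₂ * ∑ i, ‖((x i : ℝ) : AddCircle (1 : ℝ))‖ ^ 2 := by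
  obtain ⟨A, hA, hbound⟩ := exists_sum_norm_sq_le_mul_one_sub_cosTransform hpos hprob hgen
  have hB : 0 ≤ d / (8 * μ 0) := by positivity
  refine ⟨(A + d / (8 * μ 0) + 1)⁻¹, by positivity, fun x => ?_⟩
  refine abs_le_one_sub_inv_mul_of_le_mul (abs_cosTransform_le_one hpos hprob x) hA hB
    (hbound x) ?_
  calc ∑ i, ‖(x i : UnitAddCircle)‖ ^ 2 ≤ d / 4 := by
        simpa using UnitAddCircle.sum_norm_sq_le x
    _ = d / (8 * μ 0) * (2 * μ 0) := by field_simp; ring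
    _ ≤ d / (8 * μ 0) * (1 + cosTransform μ x) :=
        mul_le_mul_of_nonneg_left (two_mul_le_one_add_cosTransform hpos hprob x) hB

/-- Let `μ` be a lazy, symmetric probability measure on `ℤ^d` whose support generates
`ℤ^d` and which has exponentially decaying tails.  Then there is `c₂ > 0` such that the
characteristic function `μ̂(x) = Σ_n μ(n) cos(2π n·x)` satisfies
`|μ̂(x)| ≤ 1 − c₂‖x‖²_{(ℝ/ℤ)^d}` for all `x`. -/
theorem stmt_18 (d : ℕ) (hd : 1 ≤ d)
    (μ : (Fin d → ℤ) → ℝ)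
    (hpos : ∀ n, 0 ≤ μ n) (hprob : HasSum μ 1)
    (hlazy : 0 < μ 0) (hsym : ∀ n, μ n = μ (-n))
    (hgen : AddSubgroup.closure (Function.support μ) = (⊤ : AddSubgroup (Fin d → ℤ)))
    (Ct ct : ℝ) (hCt : 0 < Ct) (hct : 0 < ct)
    (htail : ∀ n, μ n ≤ Ct * Real.exp (-ct * Real.sqrt (∑ i, (n i : ℝ) ^ 2))) :
    ∃ c₂ : ℝ, 0 < c₂ ∧ ∀ x : Fin d → ℝ,
      |∑' n, μ n * Real.cos (2 * Real.pi * ∑ i, (n i : ℝ) * x i)| ≤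
        1 - c₂ * ∑ i, ‖((x i : ℝ) : AddCircle (1 : ℝ))‖ ^ 2 :=
  stmt_18_general d μ hpos hprob hlazy hgen
end
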